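/- Let κ be uncountable regular with κ^{<κ} = κ. The forcing P_μ (adding a tree of height κ with μ labeled branches) satisfies the κ⁺-chain condition: every antichain in P_μ has size ≤ κ. -/

import Mathlib

/-!
Two conditions with the same tree whose branches agree on their common labels are compatible,
and `κ^{<κ} = κ` leaves at most `κ` conditions whose labels lie in a given set of `κ` labels.
Instead of a Δ-system, take a set `C` of `κ` labels, the union of a `κ`-chain, such that every
`E ⊆ C` of size `< κ` lies in a stage `D` for which each restriction to `D` of a member of `A`
is also the restriction of a member with all labels in `C` (regularity of `κ` puts `E` below
some stage). If `p ∈ A` had a label outside `C`, the member `q` of `A` chosen for the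
restriction of `p` to the stage containing `p.labels ∩ C` would be a different condition
compatible with `p`. So all members of `A` have their labels in `C`, and there are at most `κ`.
-/

open Cardinal

/-- The graph `s` codes a binary sequence with domain exactly `[0, β)`. -/
def IsSeqOn {κ : Cardinal.{0}} (s : Set ((Cardinal.ord κ).ToType × Bool))
    (β : (Cardinal.ord κ).ToType) : Prop :=
  (∀ p ∈ s, p.1 < β) ∧ ∀ γ, γ < β → ∃! b : Bool, (γ, b) ∈ s

/-- Restriction of a (graph of a) binary sequence to `[0, γ)`. -/
def restrictSeq {κ : Cardinal.{0}} (s : Set ((Cardinal.ord κ).ToType × Bool))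
    (γ : (Cardinal.ord κ).ToType) : Set ((Cardinal.ord κ).ToType × Bool) :=
  {p ∈ s | p.1 < γ}

/-- A condition in the standard forcing `P_μ` adding a Kurepa-style tree of height `κ`
with `μ` labeled branches: a subtree `tree` of `2^{<ht}` of size `< κ`, together with a
set `labels ⊆ μ` of size `< κ` and, for each label, an `ht`-branch through `tree`. -/
structure Cond (κ μ : Cardinal.{0}) where
  ht : (Cardinal.ord κ).ToType
  tree : Set (Set ((Cardinal.ord κ).ToType × Bool))
  tree_seq : ∀ s ∈ tree, ∃ β, β < ht ∧ IsSeqOn s β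
  tree_closed : ∀ s ∈ tree, ∀ γ, restrictSeq s γ ∈ tree
  tree_small : #↥tree < κ
  labels : Set (Cardinal.ord μ).ToType
  labels_small : #↥labels < κ
  br : (Cardinal.ord μ).ToType → Set ((Cardinal.ord κ).ToType × Bool)
  br_seq : ∀ δ ∈ labels, IsSeqOn (br δ) ht
  br_mem : ∀ δ ∈ labels, ∀ γ, γ < ht → restrictSeq (br δ) γ ∈ tree
  br_junk : ∀ δ ∉ labels, br δ = ∅

/-- The order of `P_μ`: `q ≤ p` iff the tree of `q` end-extends the tree of `p`, the
labels of `p` are among those of `q`, and each branch of `p` is extended by the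
corresponding branch of `q`. -/
def condLE {κ μ : Cardinal.{0}} (q p : Cond κ μ) : Prop :=
  p.ht ≤ q.ht ∧
  (∀ s, s ∈ p.tree ↔ s ∈ q.tree ∧ ∃ β, β < p.ht ∧ IsSeqOn s β) ∧
  p.labels ⊆ q.labels ∧
  ∀ δ ∈ p.labels, p.br δ ⊆ q.br δ

open Set

universe u

section SmallClosure

variable {α : Type u} {κ : Cardinal.{u}}

def smallSubsets (κ : Cardinal.{u}) (S : Set α) : Set (Set α) := {t | t ⊆ S ∧ #t < κ}

theorem mk_smallSubsets_le (hκ : ℵ₀ ≤ κ) (hpow : κ ^< κ = κ) {S : Set α} (hS : #S ≤ κ) :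
    #(smallSubsets κ S) ≤ κ := by
  have hcover : smallSubsets κ S ⊆ ⋃ j < κ.ord, {t | t ⊆ S ∧ #t ≤ j.card} := fun t ht =>
    mem_iUnion₂.2 ⟨(#t).ord, ord_lt_ord.2 ht.2, ht.1, (card_ord _).ge⟩
  refine (mk_le_mk_of_subset hcover).trans <| mk_biUnion_le_of_le (card_ord κ).le hκ _ ?_
  intro j hj
  calc #{t | t ⊆ S ∧ #t ≤ j.card} ≤ max #S ℵ₀ ^ j.card := mk_bounded_subset_le S _
    _ ≤ κ ^ j.card := power_le_power_right (max_le hS hκ)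
    _ ≤ κ := (le_powerlt κ (lt_ord.1 hj)).trans hpow.le

def SmallClosed (κ : Cardinal.{u}) (F : Set α → Set α) (C : Set α) : Prop :=
  ∀ E ⊆ C, #E < κ → ∃ D, E ⊆ D ∧ F D ⊆ C

noncomputable def closureStage (F : Set α → Set α) : Ordinal.{u} → Set α :=
  wellFounded_lt.fix fun o stage => ⋃ j : Iio o, (stage j j.2 ∪ F (stage j j.2))

theorem closureStage_eq (F : Set α → Set α) (o : Ordinal.{u}) :
    closureStage F o = ⋃ j < o, (closureStage F j ∪ F (closureStage F j)) := by
  rw [closureStage, WellFounded.fix_eq, iUnion_subtype]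
  rfl

theorem union_closureStage_subset (F : Set α → Set α) {j o : Ordinal.{u}} (h : j < o) :
    closureStage F j ∪ F (closureStage F j) ⊆ closureStage F o := by
  rw [closureStage_eq F o]
  exact subset_biUnion_of_mem (u := fun j => closureStage F j ∪ F (closureStage F j)) h

theorem mk_closureStage_le (hκ : ℵ₀ ≤ κ) {F : Set α → Set α}
    (hF : ∀ D : Set α, #D ≤ κ → #(F D) ≤ κ) {o : Ordinal.{u}} (ho : o < κ.ord) :
    #(closureStage F o) ≤ κ := by
  induction o using WellFoundedLT.induction with
  | _ o ih =>
    rw [closureStage_eq]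
    refine mk_biUnion_le_of_le (lt_ord.1 ho).le hκ _ fun j hj => ?_
    have hj' := ih j hj (hj.trans ho)
    calc #(closureStage F j ∪ F (closureStage F j) : Set α) ≤ κ + κ :=
          (mk_union_le _ _).trans (add_le_add hj' (hF _ hj'))
      _ = κ := add_eq_self hκ

theorem exists_smallClosed (hreg : κ.IsRegular) {F : Set α → Set α}
    (hF : ∀ D : Set α, #D ≤ κ → #(F D) ≤ κ) : ∃ C : Set α, #C ≤ κ ∧ SmallClosed κ F C := by
  have hκ := hreg.aleph0_le
  refine ⟨⋃ j < κ.ord, closureStage F j,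
    mk_biUnion_le_of_le (card_ord κ).le hκ _ fun j hj => mk_closureStage_le hκ hF hj, ?_⟩
  intro E hE hEκ
  have hstage : ∀ x : E, ∃ j < κ.ord, (x : α) ∈ closureStage F j := fun x =>
    by simpa using hE x.2
  choose j hjκ hxj using hstage
  set o := ⨆ x, j x + 1
  have ho : o < κ.ord := Ordinal.iSup_add_one_lt_of_lt_cof (by rwa [hreg.cof_ord]) hjκ
  refine ⟨closureStage F o, fun x hx => ?_, fun x hx => ?_⟩
  · have hlt : j ⟨x, hx⟩ < o :=
      (Order.lt_add_one_iff.2 le_rfl).trans_le (Ordinal.le_iSup (fun x => j x + 1) ⟨x, hx⟩)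
    exact (union_closureStage_subset F hlt) (Or.inl (hxj ⟨x, hx⟩))
  · exact mem_biUnion ((isSuccLimit_ord hκ).add_one_lt ho)
      (union_closureStage_subset F (Order.lt_add_one_iff.2 le_rfl) (Or.inr hx))

end SmallClosure

theorem IsSeqOn.mk_lt {κ : Cardinal.{0}} (hκ : ℵ₀ ≤ κ) {s : Set (κ.ord.ToType × Bool)}
    {β : κ.ord.ToType} (h : IsSeqOn s β) : #s < κ := by
  have hsub : s ⊆ Iio β ×ˢ Set.univ := fun x hx => ⟨h.1 x hx, trivial⟩
  refine (mk_le_mk_of_subset hsub).trans_lt ?_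
  rw [mk_setProd, mk_univ, mk_bool]
  exact mul_lt_of_lt hκ (by simpa using mk_Iio_lt β (by simp)) (ofNat_lt_aleph0.trans_le hκ)

namespace Cond

variable {κ μ : Cardinal.{0}}

def Compatible (p q : Cond κ μ) : Prop := ∃ r, condLE r p ∧ condLE r q

theorem ext {p q : Cond κ μ} (hht : p.ht = q.ht) (htree : p.tree = q.tree)
    (hlabels : p.labels = q.labels) (hbr : p.br = q.br) : p = q := by
  cases p; cases q
  cases hht; cases htree; cases hlabels; cases hbr
  rfl

theorem ext_graphOn {p q : Cond κ μ} (hht : p.ht = q.ht) (htree : p.tree = q.tree)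
    (hgraph : p.labels.graphOn p.br = q.labels.graphOn q.br) : p = q := by
  have hlabels : p.labels = q.labels := by
    rw [← image_fst_graphOn p.br p.labels, hgraph, image_fst_graphOn]
  refine ext hht htree hlabels (funext fun δ => ?_)
  by_cases hδ : δ ∈ p.labels
  · have hmem : (δ, p.br δ) ∈ q.labels.graphOn q.br := hgraph ▸ mem_graphOn.2 ⟨hδ, rfl⟩
    exact (mem_graphOn.1 hmem).2.symm
  · rw [p.br_junk δ hδ, q.br_junk δ (hlabels ▸ hδ)]

theorem compatible_of_eqOn (hκ : ℵ₀ ≤ κ) {p q : Cond κ μ} (hht : p.ht = q.ht)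
    (htree : p.tree = q.tree) (hbr : EqOn p.br q.br (p.labels ∩ q.labels)) :
    Compatible p q := by
  classical
  cases q with
  | mk ht tree tree_seq _ _ labels _ br br_seq br_mem br_junk =>
  dsimp only at hht htree hbr
  subst hht htree
  refine ⟨{ p with
    labels := p.labels ∪ labels
    labels_small := (mk_union_le _ _).trans_lt (add_lt_of_lt hκ p.labels_small ‹_›)
    br := fun δ => if δ ∈ p.labels then p.br δ else br δ
    br_seq := ?_, br_mem := ?_, br_junk := ?_ }, ?_, ?_⟩
  · intro δ hδ
    split_ifs with h
    exacts [p.br_seq δ h, br_seq δ (hδ.resolve_left h)]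
  · intro δ hδ
    split_ifs with h
    exacts [p.br_mem δ h, br_mem δ (hδ.resolve_left h)]
  · intro δ hδ
    rw [if_neg fun h => hδ (Or.inl h)]
    exact br_junk δ fun h => hδ (Or.inr h)
  · exact ⟨le_rfl, fun s => ⟨fun hs => ⟨hs, p.tree_seq s hs⟩, And.left⟩, subset_union_left,
      fun δ hδ => (if_pos hδ).ge⟩
  · refine ⟨le_rfl, fun s => ⟨fun hs => ⟨hs, tree_seq s hs⟩, And.left⟩, subset_union_right,
      fun δ hδ => ?_⟩
    dsimp only
    split_ifs with h
    exacts [(hbr ⟨h, hδ⟩).ge, subset_rfl]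

open Classical in
noncomputable def restrict (p : Cond κ μ) (D : Set μ.ord.ToType) : Cond κ μ :=
  { p with
    labels := p.labels ∩ D
    labels_small := (mk_le_mk_of_subset inter_subset_left).trans_lt p.labels_small
    br := fun δ => if δ ∈ p.labels ∩ D then p.br δ else ∅
    br_seq := fun δ hδ => by simpa only [if_pos hδ] using p.br_seq δ hδ.1
    br_mem := fun δ hδ => by simpa only [if_pos hδ] using p.br_mem δ hδ.1
    br_junk := fun δ hδ => if_neg hδ }

theorem compatible_of_restrict_eq (hκ : ℵ₀ ≤ κ) {p q : Cond κ μ} {D : Set μ.ord.ToType}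
    (h : p.restrict D = q.restrict D) (hD : p.labels ∩ q.labels ⊆ D) : Compatible p q := by
  refine compatible_of_eqOn hκ (congrArg (·.ht) h) (congrArg (·.tree) h) fun δ hδ => ?_
  have hδD := hD hδ
  simpa [restrict, hδ.1, hδ.2, hδD] using congrArg (·.br δ) h

theorem mk_setOf_labels_subset_le (hκ : ℵ₀ ≤ κ) (hpow : κ ^< κ = κ) {D : Set μ.ord.ToType}
    (hD : #D ≤ κ) : #{p : Cond κ μ | p.labels ⊆ D} ≤ κ := by
  set seqs := smallSubsets κ (Set.univ : Set (κ.ord.ToType × Bool))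
  have hseqs : #seqs ≤ κ := mk_smallSubsets_le hκ hpow <| by
    simpa using (Cardinal.mul_eq_left hκ (ofNat_lt_aleph0.le.trans hκ) two_ne_zero).le
  have hinj : Function.Injective fun p : Cond κ μ => (p.ht, p.tree, p.labels.graphOn p.br) :=
    fun p q h => ext_graphOn (congrArg (·.1) h) (congrArg (·.2.1) h) (congrArg (·.2.2) h)
  have hmaps : MapsTo (fun p : Cond κ μ => (p.ht, p.tree, p.labels.graphOn p.br))
      {p | p.labels ⊆ D} (Set.univ ×ˢ smallSubsets κ seqs ×ˢ smallSubsets κ (D ×ˢ seqs)) := by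
    intro p hp
    refine ⟨trivial, ⟨fun s hs => ?_, p.tree_small⟩, ?_, ?_⟩
    · obtain ⟨β, -, hβ⟩ := p.tree_seq s hs
      exact ⟨subset_univ s, hβ.mk_lt hκ⟩
    · rintro _ ⟨δ, hδ, rfl⟩
      exact ⟨hp hδ, subset_univ _, (p.br_seq δ hδ).mk_lt hκ⟩
    · exact (mk_image_eq fun a b h => congrArg Prod.fst h).trans_lt p.labels_small
  have hDseqs : #(D ×ˢ seqs) ≤ κ := by
    rw [mk_setProd]
    exact (mul_le_mul' hD hseqs).trans (mul_eq_self hκ).le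
  calc #{p : Cond κ μ | p.labels ⊆ D} = #(_ '' {p : Cond κ μ | p.labels ⊆ D}) :=
        (mk_image_eq hinj).symm
    _ ≤ #(Set.univ ×ˢ smallSubsets κ seqs ×ˢ smallSubsets κ (D ×ˢ seqs)) :=
        mk_le_mk_of_subset hmaps.image_subset
    _ ≤ κ * (κ * κ) := by
      rw [mk_setProd, mk_setProd, mk_univ, mk_ord_toType]
      exact mul_le_mul' le_rfl (mul_le_mul' (mk_smallSubsets_le hκ hpow hseqs)
        (mk_smallSubsets_le hκ hpow hDseqs))
    _ = κ := by rw [mul_eq_self hκ, mul_eq_self hκ]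

noncomputable def witnessLabels (A : Set (Cond κ μ)) (D : Set μ.ord.ToType) :
    Set μ.ord.ToType :=
  ⋃ t : (restrict · D) '' A, t.2.choose.labels

theorem mk_witnessLabels_le (hκ : ℵ₀ ≤ κ) (hpow : κ ^< κ = κ) (A : Set (Cond κ μ))
    (D : Set μ.ord.ToType) (hD : #D ≤ κ) : #(witnessLabels A D) ≤ κ := by
  have himage : #((restrict · D) '' A) ≤ κ :=
    (mk_le_mk_of_subset (image_subset_iff.2 fun p _ => inter_subset_right)).trans
      (mk_setOf_labels_subset_le hκ hpow hD)
  calc #(witnessLabels A D) ≤ #((restrict · D) '' A) * ⨆ t : (restrict · D) '' A,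
        #t.2.choose.labels := mk_iUnion_le _
    _ ≤ κ * κ := mul_le_mul' himage (ciSup_le' fun t => t.2.choose.labels_small.le)
    _ = κ := mul_eq_self hκ

theorem exists_restrict_eq_labels_subset_witnessLabels {A : Set (Cond κ μ)}
    {D : Set μ.ord.ToType} {p : Cond κ μ} (hp : p ∈ A) :
    ∃ q ∈ A, q.restrict D = p.restrict D ∧ q.labels ⊆ witnessLabels A D := by
  let t : (restrict · D) '' A := ⟨p.restrict D, mem_image_of_mem _ hp⟩
  obtain ⟨hq, hqp⟩ := t.2.choose_spec
  exact ⟨_, hq, hqp, subset_iUnion (fun t : (restrict · D) '' A => t.2.choose.labels) t⟩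

end Cond

theorem cond_kappa_plus_cc_general (κ μ : Cardinal.{0})
    (hreg : κ.IsRegular) (hpow : κ ^< κ = κ)
    (A : Set (Cond κ μ))
    (hA : ∀ p ∈ A, ∀ q ∈ A, p ≠ q → ¬∃ r, condLE r p ∧ condLE r q) :
    #↥A ≤ κ := by
  have hκ := hreg.aleph0_le
  obtain ⟨C, hC, hclosed⟩ := exists_smallClosed hreg (Cond.mk_witnessLabels_le hκ hpow A)
  suffices hAC : ∀ p ∈ A, p.labels ⊆ C from
    (mk_le_mk_of_subset hAC).trans (Cond.mk_setOf_labels_subset_le hκ hpow hC)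
  intro p hp
  by_contra hpC
  obtain ⟨D, hpD, hDC⟩ := hclosed (p.labels ∩ C) inter_subset_right
    ((mk_le_mk_of_subset inter_subset_left).trans_lt p.labels_small)
  obtain ⟨q, hq, hqp, hqD⟩ := Cond.exists_restrict_eq_labels_subset_witnessLabels (D := D) hp
  have hqC := hqD.trans hDC
  exact hA p hp q hq (fun h => hpC (h ▸ hqC))
    (Cond.compatible_of_restrict_eq hκ hqp.symm fun δ hδ => hpD ⟨hδ.1, hqC hδ.2⟩)

/-- If `κ` is uncountable regular with `κ^{<κ} = κ`, then the forcing `P_μ` satisfies the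
`κ⁺`-chain condition: every antichain has cardinality at most `κ`. -/
theorem cond_kappa_plus_cc (κ μ : Cardinal.{0}) (hℵ : Cardinal.aleph0 < κ)
    (hreg : κ.IsRegular) (hpow : κ ^< κ = κ) (hμ : κ ≤ μ)
    (A : Set (Cond κ μ))
    (hA : ∀ p ∈ A, ∀ q ∈ A, p ≠ q → ¬∃ r, condLE r p ∧ condLE r q) :
    #↥A ≤ κ :=
  cond_kappa_plus_cc_general κ μ hreg hpow A hA
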